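/- (Upper semicontinuity of the type; the semicontinuity claim of Section 2.2 of the paper, pointwise form.) Let X be a topological space and J : X → End(W) a continuous map such that J_x is bijective for every x ∈ X (for instance, J_x² = −Id for every x). Then the function x ↦ dim_ℝ(V* ∩ J_x(V*)) is upper semicontinuous on X. -/

import Mathlib

/-!
Writing `s = V*`, injectivity of `J x` gives `dim (s ⊓ J_x s) = 2 dim s - dim (s ⊔ J_x s)`, and
`s ⊔ J_x s` is the range of `(a, b) ↦ a + J_x b` on `s × s`, a continuous family of linear maps.
The rank of such a family can only go up near a point, because linear independence of finitely
many vectors is an open condition; hence `dim (s ⊓ J_x s)` can only go down.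
-/

noncomputable section

open Module

/-- The subspace `V* = {0} × V*` of `W = V × V*` (with `V*` the topological dual). -/
def dualSub (V : Type*) [NormedAddCommGroup V] [NormedSpace ℝ V] :
    Submodule ℝ (V × StrongDual ℝ V) :=
  (⊥ : Submodule ℝ V).prod (⊤ : Submodule ℝ (StrongDual ℝ V))

open Filter Topology

theorem Submodule.finrank_inf_map_add_finrank_sup_map {K M : Type*} [DivisionRing K]
    [AddCommGroup M] [Module K M] [FiniteDimensional K M] (s : Submodule K M) {φ : M →ₗ[K] M}
    (hφ : Function.Injective φ) :
    finrank K ↥(s ⊓ s.map φ) + finrank K ↥(s ⊔ s.map φ) = 2 * finrank K s := by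
  rw [add_comm, Submodule.finrank_sup_add_finrank_inf_eq, two_mul,
    ← (Submodule.equivMapOfInjective φ hφ s).finrank_eq]

section

variable {𝕜 : Type*} [NontriviallyNormedField 𝕜]
  {E : Type*} [NormedAddCommGroup E] [NormedSpace 𝕜 E]
  {F : Type*} [NormedAddCommGroup F] [NormedSpace 𝕜 F]
  {X : Type*} [TopologicalSpace X]

theorem Submodule.range_coprod_subtypeL_comp (s : Submodule 𝕜 F) (φ : F →L[𝕜] F) :
    (s.subtypeL.coprod (φ ∘L s.subtypeL) : s × s →ₗ[𝕜] F).range = s ⊔ s.map (φ : F →ₗ[𝕜] F) := by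
  simp [LinearMap.range_coprod, LinearMap.range_comp]

variable [CompleteSpace 𝕜] [FiniteDimensional 𝕜 F]

theorem Continuous.eventually_finrank_range_le {f : X → E →L[𝕜] F} (hf : Continuous f) (x₀ : X) :
    ∀ᶠ x in 𝓝 x₀, finrank 𝕜 (f x₀ : E →ₗ[𝕜] F).range ≤ finrank 𝕜 (f x : E →ₗ[𝕜] F).range := by
  have hopen := (isOpen_setOfPred_nat_le_rank (𝕜 := 𝕜) (E := E) (F := F)
    (finrank 𝕜 (f x₀ : E →ₗ[𝕜] F).range)).preimage hf
  filter_upwards [hopen.mem_nhds (by simp [LinearMap.rank, finrank_eq_rank])] with x hx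
  simpa [LinearMap.rank, ← finrank_eq_rank] using hx

theorem Continuous.eventually_finrank_sup_map_le {φ : X → F →L[𝕜] F} (hφ : Continuous φ)
    (s : Submodule 𝕜 F) (x₀ : X) :
    ∀ᶠ x in 𝓝 x₀, finrank 𝕜 ↥(s ⊔ s.map (φ x₀ : F →ₗ[𝕜] F)) ≤
      finrank 𝕜 ↥(s ⊔ s.map (φ x : F →ₗ[𝕜] F)) := by
  have hL : Continuous fun x => s.subtypeL.coprod (φ x ∘L s.subtypeL) := by
    fun_prop
  filter_upwards [hL.eventually_finrank_range_le x₀] with x hx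
  rwa [s.range_coprod_subtypeL_comp, s.range_coprod_subtypeL_comp] at hx

theorem Continuous.upperSemicontinuous_finrank_inf_map {φ : X → F →L[𝕜] F} (hφ : Continuous φ)
    (hφinj : ∀ x, Function.Injective (φ x)) (s : Submodule 𝕜 F) :
    UpperSemicontinuous fun x => finrank 𝕜 ↥(s ⊓ s.map (φ x : F →ₗ[𝕜] F)) := by
  intro x₀ n hn
  dsimp only at hn
  filter_upwards [hφ.eventually_finrank_sup_map_le s x₀] with x hx
  have hx₀ := s.finrank_inf_map_add_finrank_sup_map (hφinj x₀)
  have hx' := s.finrank_inf_map_add_finrank_sup_map (hφinj x)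
  omega

end

/-- Upper semicontinuity of the type: if `J : X → End(W)` is continuous with bijective values,
then `x ↦ dim (V* ∩ J_x(V*))` is upper semicontinuous. -/
theorem type_upperSemicontinuous
    {V : Type*} [NormedAddCommGroup V] [NormedSpace ℝ V] [FiniteDimensional ℝ V]
    {X : Type*} [TopologicalSpace X]
    (J : X → ((V × StrongDual ℝ V) →L[ℝ] (V × StrongDual ℝ V)))
    (hJ : Continuous J)
    (hbij : ∀ x, Function.Bijective (J x)) :
    UpperSemicontinuous (fun x : X =>
      (finrank ℝ
        ↥(dualSub V ⊓ (dualSub V).map ((J x : (V × StrongDual ℝ V) →ₗ[ℝ]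
          (V × StrongDual ℝ V)))) : ℕ)) :=
  hJ.upperSemicontinuous_finrank_inf_map (fun x => (hbij x).injective) (dualSub V)
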